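/- arXiv:2512.20078 — 3 statements merged into one kernel-verified Lean document; each statement's English description precedes it below -/
import Mathlib

section
/- The inversion identity: for any sequences related by b_n = Σ_{k=0}^{n} C(n,k) (1-λ)_{n-k,λ} a_k for all n, one has a_n = Σ_{k=0}^{n} C(n,k) (-1)^{n-k} ⟨1-λ⟩_{n-k,λ} b_k for all n. -/
/-!
The sequences `(1-λ)_{n,λ}` and `(-1)ⁿ⟨1-λ⟩_{n,λ} = (-(1-λ))_{n,λ}` have exponential generating
functions `e_λ^{1-λ}(t)` and `e_λ^{-(1-λ)}(t)`. The degenerate Chu–Vandermonde identity says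
`e_λ^x e_λ^y = e_λ^{x+y}`, so these two series are mutually inverse, and the relation
`b = Σ C(n,k) (1-λ)_{n-k,λ} a_k` reads `B = e_λ^{1-λ} A` for the exponential generating
functions `A`, `B`; multiplying by `e_λ^{-(1-λ)}` gives `A = e_λ^{-(1-λ)} B`.
-/

/-- The degenerate falling factorial `(x)_{n,λ} = x(x-λ)(x-2λ)⋯(x-(n-1)λ)`. -/
def degFall (l x : ℝ) : ℕ → ℝ
  | 0 => 1
  | n + 1 => degFall l x n * (x - n * l)

/-- The degenerate rising factorial `⟨x⟩_{n,λ} = x(x+λ)(x+2λ)⋯(x+(n-1)λ)`. -/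
def degRise (l x : ℝ) : ℕ → ℝ
  | 0 => 1
  | n + 1 => degRise l x n * (x + n * l)

/-- The degenerate exponential `e_λ^x(t) = Σ (x)_{n,λ} tⁿ/n!` as a formal power series. -/
noncomputable def degExp (l x : ℝ) : PowerSeries ℝ :=
  PowerSeries.mk fun n => degFall l x n / n.factorial

open Finset PowerSeries Nat

section BinomialConvolution

def binomConv {R : Type*} [CommSemiring R] (a c : ℕ → R) (n : ℕ) : R :=
  ∑ ij ∈ antidiagonal n, (n.choose ij.1 : R) * a ij.1 * c ij.2

theorem binomConv_eq_sum_range {R : Type*} [CommSemiring R] (a c : ℕ → R) (n : ℕ) :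
    binomConv a c n = ∑ k ∈ range (n + 1), (n.choose k : R) * c (n - k) * a k := by
  rw [binomConv, Nat.sum_antidiagonal_eq_sum_range_succ fun i j => (n.choose i : R) * a i * c j]
  exact sum_congr rfl fun k _ => mul_right_comm _ _ _

variable {K : Type*} [Field K] [CharZero K]

noncomputable def egf (a : ℕ → K) : K⟦X⟧ :=
  PowerSeries.mk fun n => a n / n !

theorem egf_injective : Function.Injective (egf : (ℕ → K) → K⟦X⟧) := by
  intro a b hab
  funext n
  have hn := congrArg (coeff n) hab
  simp only [egf, coeff_mk] at hn
  exact (div_left_inj' (Nat.cast_ne_zero.2 (factorial_ne_zero n))).1 hn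

theorem egf_binomConv (a c : ℕ → K) : egf (binomConv a c) = egf a * egf c := by
  ext n
  simp only [egf, binomConv, coeff_mk, coeff_mul, sum_div]
  refine sum_congr rfl fun ij hij => ?_
  obtain rfl := mem_antidiagonal.1 hij
  have hfact : (((ij.1 + ij.2).choose ij.1 * ij.1 ! * ij.2 ! : ℕ) : K) = (ij.1 + ij.2)! := by
    rw [Nat.choose_symm_add, Nat.add_choose_mul_factorial_mul_factorial]
  push_cast at hfact
  have hchoose : ((ij.1 + ij.2).choose ij.1 : K) ≠ 0 :=
    Nat.cast_ne_zero.2 (choose_pos (Nat.le_add_right _ _)).ne'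
  rw [← hfact]
  field_simp

theorem eq_binomConv_of_egf_mul_eq_one {a b c d : ℕ → K} (hcd : egf c * egf d = 1)
    (hb : b = binomConv a c) : a = binomConv b d :=
  egf_injective <| by rw [egf_binomConv, hb, egf_binomConv, mul_assoc, hcd, mul_one]

end BinomialConvolution

theorem neg_one_pow_mul_degRise (l x : ℝ) :
    ∀ m, (-1 : ℝ) ^ m * degRise l x m = degFall l (-x) m
  | 0 => by simp [degRise, degFall]
  | m + 1 => by
    rw [degRise, degFall, ← neg_one_pow_mul_degRise l x m]
    ring

theorem degFall_zero_succ (l : ℝ) : ∀ n, degFall l 0 (n + 1) = 0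
  | 0 => by simp [degFall]
  | n + 1 => by rw [degFall, degFall_zero_succ l n, zero_mul]

theorem degFall_add (l x y : ℝ) :
    degFall l (x + y) = binomConv (degFall l x) (degFall l y) := by
  funext n
  simp only [binomConv, mul_assoc]
  induction n with
  | zero => simp [degFall]
  | succ n ih =>
    rw [sum_antidiagonal_choose_succ_mul fun i j => degFall l x i * degFall l y j, degFall, ih,
      sum_mul, ← sum_add_distrib]
    refine sum_congr rfl fun ij hij => ?_
    obtain rfl := mem_antidiagonal.1 hij
    -- `x + y - (i + j)λ = (x - iλ) + (y - jλ)` splits the new factor between the two Pascal halves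
    rw [Nat.choose_symm_add, degFall, degFall]
    push_cast
    ring

theorem degExp_eq_egf (l x : ℝ) : degExp l x = egf (degFall l x) := rfl

theorem degExp_add (l x y : ℝ) : degExp l (x + y) = degExp l x * degExp l y := by
  rw [degExp_eq_egf, degFall_add, egf_binomConv]
  rfl

theorem degExp_zero (l : ℝ) : degExp l 0 = 1 := by
  ext (_ | n)
  · simp [degExp, degFall]
  · simp [degExp, degFall_zero_succ]

theorem degExp_mul_degExp_neg (l x : ℝ) : degExp l x * degExp l (-x) = 1 := by
  rw [← degExp_add, add_neg_cancel, degExp_zero]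

theorem deg_binomial_inversion (l : ℝ) (a b : ℕ → ℝ)
    (h : ∀ n : ℕ, b n = ∑ k ∈ Finset.range (n + 1),
        (n.choose k : ℝ) * degFall l (1 - l) (n - k) * a k) (n : ℕ) :
    a n = ∑ k ∈ Finset.range (n + 1),
      (n.choose k : ℝ) * (-1) ^ (n - k) * degRise l (1 - l) (n - k) * b k := by
  have hb : b = binomConv a (degFall l (1 - l)) := funext fun n => by
    rw [h, binomConv_eq_sum_range]
  rw [eq_binomConv_of_egf_mul_eq_one (degExp_mul_degExp_neg l (1 - l)) hb,
    binomConv_eq_sum_range]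
  refine sum_congr rfl fun k _ => ?_
  rw [mul_assoc _ ((-1 : ℝ) ^ _), neg_one_pow_mul_degRise]
end

section
/- Degenerate Seidel generating-function formula: if (a_{k,n}) is the degenerate Euler–Seidel matrix with initial row generating function A_λ(t) = Σ_{n≥0} a_{0,n} t^n/n!, then the final sequence generating function satisfies Σ_{n≥0} a_{n,0} t^n/n! = e_λ^{1-λ}(t) · A_λ(t) as formal power series. -/
lemma degFall_shift (l x : ℝ) : ∀ j : ℕ, degFall l (x + l) (j + 1) = (x + l) * degFall l x j := by
  intro j
  induction j with
  | zero => simp [degFall]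
  | succ j IH =>
    have : degFall l (x + l) (j + 2) = degFall l (x + l) (j + 1) * (x + l - (j+1) * l) := by
      simp [degFall]
    rw [this, IH]
    have : degFall l x (j + 1) = degFall l x j * (x - j * l) := by simp [degFall]
    rw [this]
    ring

lemma degES_key (l : ℝ) (a : ℕ → ℕ → ℝ)
    (ha : ∀ k n : ℕ, a (k + 1) n
        = (1 - ((k + 1 : ℝ) - n) * l) * a k n + a k (n + 1)) :
    ∀ k n : ℕ, a k n = ∑ j ∈ Finset.range (k + 1),
      (k.choose j : ℝ) * degFall l (1 - (1 - (n : ℝ)) * l) j * a 0 (n + k - j) := by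
  intro k
  induction k with
  | zero => intro n; simp [degFall]
  | succ k IH =>
    intro n
    rw [ha k n, IH n, IH (n + 1)]
    rw [Finset.sum_range_succ' _ (k + 1)]
    rw [Finset.sum_range_succ' (fun j => ((k.choose j : ℝ)) *
      degFall l (1 - (1 - ((n+1 : ℕ) : ℝ)) * l) j * a 0 ((n+1) + k - j)) k]
    have hx : (1 : ℝ) - (1 - ((n+1 : ℕ) : ℝ)) * l = (1 - (1 - (n : ℝ)) * l) + l := by
      push_cast; ring
    set x : ℝ := 1 - (1 - (n : ℝ)) * l with hxdef
    -- extend the second sum to range (k+1)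
    have hext : (∑ j ∈ Finset.range k, ((k.choose (j+1) : ℝ)) *
        degFall l (1 - (1 - ((n+1 : ℕ) : ℝ)) * l) (j+1) * a 0 ((n+1) + k - (j+1)))
        = ∑ j ∈ Finset.range (k+1), ((k.choose (j+1) : ℝ)) *
        degFall l (1 - (1 - ((n+1 : ℕ) : ℝ)) * l) (j+1) * a 0 ((n+1) + k - (j+1)) := by
      rw [Finset.sum_range_succ]
      simp [Nat.choose_succ_self]
    rw [hext, Finset.mul_sum]
    rw [← add_assoc, ← Finset.sum_add_distrib]
    have hsum : ∀ j ∈ Finset.range (k+1),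
        (1 - ((k + 1 : ℝ) - n) * l) * ((k.choose j : ℝ) * degFall l x j * a 0 (n + k - j))
        + ((k.choose (j+1) : ℝ)) * degFall l (1 - (1 - ((n+1 : ℕ) : ℝ)) * l) (j+1)
            * a 0 ((n+1) + k - (j+1))
        = ((k+1).choose (j+1) : ℝ) * degFall l x (j+1) * a 0 (n + (k+1) - (j+1)) := by
      intro j hj
      have hjk : j ≤ k := Nat.lt_succ_iff.mp (Finset.mem_range.mp hj)
      rw [hx, degFall_shift]
      have hidx1 : (n+1) + k - (j+1) = n + k - j := by omega
      have hidx2 : n + (k+1) - (j+1) = n + k - j := by omega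
      rw [hidx1, hidx2]
      have hF : degFall l x (j+1) = degFall l x j * (x - j * l) := by simp [degFall]
      rw [hF]
      have hch : ((k+1).choose (j+1) : ℝ) = (k.choose j : ℝ) + (k.choose (j+1) : ℝ) := by
        rw [Nat.choose_succ_succ]; push_cast; ring
      have hch2 : (k.choose (j+1) : ℝ) * ((j : ℝ) + 1) = (k.choose j : ℝ) * ((k : ℝ) - j) := by
        have h2 := congrArg (fun m : ℕ => (m : ℝ)) (Nat.choose_succ_right_eq k j)
        push_cast [Nat.cast_sub hjk] at h2
        exact h2
      rw [hch]
      linear_combination (l * degFall l x j * a 0 (n + k - j)) * hch2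
    rw [Finset.sum_congr rfl hsum]
    have : a 0 (n + 1 + k) = a 0 (n + (k+1) - 0) := by congr 1; omega
    simp [this, degFall]

theorem degEulerSeidel_genFun (l : ℝ) (a : ℕ → ℕ → ℝ)
    (ha : ∀ k n : ℕ, a (k + 1) n
        = (1 - ((k + 1 : ℝ) - n) * l) * a k n + a k (n + 1)) :
    PowerSeries.mk (fun n => a n 0 / n.factorial)
      = degExp l (1 - l) * PowerSeries.mk (fun n => a 0 n / n.factorial) := by
  ext n
  rw [PowerSeries.coeff_mk, PowerSeries.coeff_mul]
  simp only [degExp, PowerSeries.coeff_mk]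
  rw [Finset.Nat.sum_antidiagonal_eq_sum_range_succ_mk]
  rw [degES_key l a ha n 0]
  rw [Finset.sum_div]
  refine Finset.sum_congr rfl fun j hj => ?_
  have hjn : j ≤ n := Nat.lt_succ_iff.mp (Finset.mem_range.mp hj)
  have hfac : ((n.factorial : ℝ)) = (n.choose j : ℝ) * j.factorial * (n - j).factorial := by
    exact_mod_cast (Nat.choose_mul_factorial_mul_factorial hjn).symm
  have h0 : (1 : ℝ) - (1 - ((0 : ℕ) : ℝ)) * l = 1 - l := by push_cast; ring
  rw [h0]
  have hidx : 0 + n - j = n - j := by omega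
  rw [hidx]
  have h1 : (j.factorial : ℝ) ≠ 0 := by positivity
  have h2 : ((n - j).factorial : ℝ) ≠ 0 := by positivity
  have h3 : (n.factorial : ℝ) ≠ 0 := by positivity
  field_simp
  rw [hfac]
  ring
end

section
/- For all n ≥ 0 and all x, the degenerate Genocchi polynomials satisfy 𝓖_{n,λ}(x+1-λ) = 2n(x-λ)_{n-1,λ} − 𝓖_{n,λ}(x-λ), with the convention that the first term vanishes for n = 0. -/
/-!
Since `e_λ^{x+1-λ}(t) = e_λ(t) e_λ^{x-λ}(t)`, adding the defining identities at `x + 1 - λ` and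
`x - λ` gives `(e_λ(t) + 1) Σ (𝓖_{n,λ}(x+1-λ) + 𝓖_{n,λ}(x-λ)) tⁿ/n! = (e_λ(t) + 1) 2t e_λ^{x-λ}(t)`.
The factor `e_λ(t) + 1` has constant term `2`, so it cancels, and comparing coefficients of `tⁿ`
gives the theorem. The addition law of `e_λ` is the Chu–Vandermonde identity for the falling
factorial, after the rescaling `(x)_{n,λ} = λⁿ (x/λ)_n`.
-/

open PowerSeries Finset

lemma degFall_eq_smeval_descPochhammer {l : ℝ} (hl : l ≠ 0) (x : ℝ) (n : ℕ) :
    degFall l x n = l ^ n * (descPochhammer ℤ n).smeval (x / l) := by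
  induction n with
  | zero => simp [degFall]
  | succ n ih =>
    rw [degFall, ih, descPochhammer_succ_right, Polynomial.smeval_mul, Polynomial.smeval_sub,
      Polynomial.smeval_X, Polynomial.smeval_natCast]
    field_simp
    ring

lemma degFall_add_s18 {l : ℝ} (hl : l ≠ 0) (a b : ℝ) (n : ℕ) :
    degFall l (a + b) n =
      ∑ ij ∈ antidiagonal n, n.choose ij.1 * (degFall l a ij.1 * degFall l b ij.2) := by
  simp only [degFall_eq_smeval_descPochhammer hl, add_div]
  rw [Ring.descPochhammer_smeval_add n (Commute.all (a / l) (b / l)), mul_sum]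
  refine sum_congr rfl fun ij hij => ?_
  rw [← mem_antidiagonal.mp hij, pow_add]
  ring

lemma degExp_mul_degExp {l : ℝ} (hl : l ≠ 0) (a b : ℝ) :
    degExp l a * degExp l b = degExp l (a + b) := by
  ext n
  simp only [degExp, coeff_mul, coeff_mk, degFall_add_s18 hl, sum_div]
  refine sum_congr rfl fun ij hij => ?_
  obtain ⟨i, j⟩ := ij
  obtain rfl : i + j = n := mem_antidiagonal.mp hij
  have hchoose : ((i + j).choose j : ℝ) ≠ 0 :=
    Nat.cast_ne_zero.mpr (Nat.choose_pos (Nat.le_add_left j i)).ne'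
  rw [Nat.choose_symm_add, ← Nat.add_choose_mul_factorial_mul_factorial]
  push_cast
  field_simp

lemma coeff_X_mul_degExp_mul_factorial (l x : ℝ) (n : ℕ) :
    coeff n (X * degExp l x) * n.factorial = n * degFall l x (n - 1) := by
  cases n with
  | zero => simp
  | succ m =>
    rw [coeff_succ_X_mul, degExp, coeff_mk, Nat.factorial_succ]
    push_cast
    field_simp

lemma degExp_add_one_ne_zero (l : ℝ) : degExp l 1 + 1 ≠ 0 := fun h => by
  simpa [degExp, degFall] using congrArg constantCoeff h

theorem degGenocchi_shift (l : ℝ) (hl : l ≠ 0) (G : ℕ → ℝ → ℝ)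
    (hG : ∀ x : ℝ, (degExp l 1 + 1) * PowerSeries.mk (fun n => G n x / n.factorial)
        = 2 * PowerSeries.X * degExp l x) (n : ℕ) (x : ℝ) :
    G n (x + 1 - l) = 2 * (n : ℝ) * degFall l (x - l) (n - 1) - G n (x - l) := by
  have hsum : mk (fun n => G n (x + 1 - l) / n.factorial) + mk (fun n => G n (x - l) / n.factorial)
      = 2 * X * degExp l (x - l) := by
    refine mul_left_cancel₀ (degExp_add_one_ne_zero l) ?_
    rw [mul_add, hG, hG, show x + 1 - l = 1 + (x - l) by ring, ← degExp_mul_degExp hl]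
    ring
  have hfac : (n.factorial : ℝ) ≠ 0 := by positivity
  have hcoeff := congrArg (fun f : PowerSeries ℝ => coeff n f * n.factorial) hsum
  simp only [map_add, coeff_mk, add_mul, div_mul_cancel₀ _ hfac, mul_assoc, ← map_ofNat C,
    coeff_C_mul, coeff_X_mul_degExp_mul_factorial] at hcoeff
  linarith
end
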